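/- arXiv:2411.09646 — 2 statements merged into one kernel-verified Lean document; each statement's English description precedes it below -/
import Mathlib

section
/- If rational numbers (or -∞ values) x₁, …, x_n ∈ ℚ ∪ {-∞} satisfy a max-average constraint system (constraints of the form x_{i₀} ≤ max(x_{i₁},…,x_{i_k}), x_{i₀} ≤ (x_{i₁}+x_{i₂})/2, and x_{i₀} = c for rational constants c), then the Puiseux series (t^{x₁}, …, t^{x_n}) (with t^{-∞} := 0) satisfy the lifted system: t^{x_{i₀}} ≤ t^{x_{i₁}} + ⋯ + t^{x_{i_k}} for each max-constraint, (t^{x_{i₀}})² ≤ t^{x_{i₁}}·t^{x_{i₂}} for each average-constraint, t^{x_{i₀}} = t^c for each constant-constraint, and each t^{x_i} ≥ 0. -/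
noncomputable section

/-- The field of (generalized) real Puiseux series, modeled as Hahn series over `ℚᵒᵈ`
(so that the leading term has the *largest* exponent, matching the "t large" convention). -/
abbrev K : Type := HahnSeries ℚᵒᵈ ℝ

/-- The leading coefficient of a Puiseux series (0 for the zero series). -/
noncomputable def leadCoeff (x : K) : ℝ := x.coeff x.order

/-- `x ≥ 0` in the ordered field of Puiseux series: leading coefficient is `≥ 0`. -/
def Knonneg (x : K) : Prop := 0 ≤ leadCoeff x

/-- The order relation on Puiseux series. -/
def Kle (x y : K) : Prop := Knonneg (y - x)

/-- The valuation (leading exponent) of a Puiseux series, `⊥ = -∞` for the zero series. -/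
noncomputable def val (x : K) : WithBot ℚ :=
  open scoped Classical in
  if x = 0 then ⊥ else (OrderDual.ofDual x.order : ℚ)

/-- The monomial `t^r`. -/
noncomputable def tmon (r : ℚ) : K := HahnSeries.single (OrderDual.toDual r) (1 : ℝ)

/-- `t^v` for `v ∈ ℚ ∪ {-∞}`, with `t^{-∞} = 0`. -/
noncomputable def tmonBot (v : WithBot ℚ) : K := WithBot.recBotCoe 0 tmon v

/-- A max-average constraint on variables indexed by `Fin n`. -/
inductive MACon (n : ℕ) where
  /-- `x i₀ ≤ max (x (idx 0), …, x (idx (k-1)))` -/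
  | maxC (i₀ : Fin n) (k : ℕ) (idx : Fin k → Fin n) : MACon n
  /-- `x i₀ ≤ (x i₁ + x i₂)/2` -/
  | avgC (i₀ i₁ i₂ : Fin n) : MACon n
  /-- `x i₀ = c` for a rational constant `c` -/
  | constC (i₀ : Fin n) (c : ℚ) : MACon n

/-- Satisfaction of a max-average constraint over `ℚ ∪ {-∞}`. -/
def SatQ {n : ℕ} (x : Fin n → WithBot ℚ) : MACon n → Prop
  | .maxC i₀ _ idx => x i₀ ≤ Finset.univ.sup (fun j => x (idx j))
  | .avgC i₀ i₁ i₂ => x i₀ ≤ (x i₁ + x i₂).map (fun q => q / 2)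
  | .constC i₀ c => x i₀ = (c : WithBot ℚ)

/-- Satisfaction of the lifted constraint over the Puiseux series field. -/
def SatK {n : ℕ} (y : Fin n → K) : MACon n → Prop
  | .maxC i₀ _ idx => Kle (y i₀) (∑ j, y (idx j))
  | .avgC i₀ i₁ i₂ => Kle ((y i₀) ^ 2) (y i₁ * y i₂)
  | .constC i₀ c => y i₀ = tmon c

/-!
The lex order on Hahn series is the order of the Puiseux field, and `v ↦ t^v` is a monotone
multiplicative map from `(ℚ ∪ {-∞}, +)` into the nonnegative Puiseux series. Hence a
max-constraint lifts because `t^{max a b} = max (t^a) (t^b) ≤ t^a + t^b` for nonnegative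
monomials, and an average constraint `x₀ ≤ (x₁ + x₂)/2` lifts after doubling it to
`x₀ + x₀ ≤ x₁ + x₂`.
-/

open HahnSeries

lemma knonneg_iff_nonneg_toLex (x : K) : Knonneg x ↔ 0 ≤ toLex x := by
  rw [Knonneg, leadCoeff, ← leadingCoeff_eq]
  exact leadingCoeff_nonneg_iff (x := toLex x)

lemma kle_iff_toLex_le (x y : K) : Kle x y ↔ toLex x ≤ toLex y := by
  rw [Kle, knonneg_iff_nonneg_toLex, toLex_sub, sub_nonneg]

lemma tmon_mul_tmon (p q : ℚ) : tmon p * tmon q = tmon (p + q) := by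
  rw [tmon, tmon, tmon, single_mul_single, one_mul]
  rfl

lemma tmonBot_add (a b : WithBot ℚ) : tmonBot (a + b) = tmonBot a * tmonBot b := by
  cases a <;> cases b <;> simp [tmonBot, ← WithBot.coe_add, tmon_mul_tmon]

lemma toLex_tmon_pos (q : ℚ) : 0 < toLex (tmon q) := by
  rw [← leadingCoeff_pos_iff, ofLex_toLex, tmon, leadingCoeff_of_single]
  exact one_pos

lemma toLex_tmon_strictMono : StrictMono fun q => toLex (tmon q) := by
  intro p q hpq
  have horder : (tmon q).orderTop < (tmon p).orderTop := by
    rw [tmon, tmon, orderTop_single one_ne_zero, orderTop_single one_ne_zero]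
    exact WithTop.coe_lt_coe.mpr (OrderDual.toDual_lt_toDual.mpr hpq)
  rw [← sub_pos, ← toLex_sub, ← leadingCoeff_pos_iff, ofLex_toLex, leadingCoeff_sub horder,
    tmon, leadingCoeff_of_single]
  exact one_pos

lemma toLex_tmonBot_nonneg (v : WithBot ℚ) : 0 ≤ toLex (tmonBot v) := by
  cases v with
  | bot => rfl
  | coe q => exact (toLex_tmon_pos q).le

lemma toLex_tmonBot_mono : Monotone fun v => toLex (tmonBot v) := by
  intro a b hab
  cases a with
  | bot => exact toLex_tmonBot_nonneg b
  | coe p =>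
    cases b with
    | bot => exact absurd hab (WithBot.not_coe_le_bot p)
    | coe q => exact toLex_tmon_strictMono.monotone (WithBot.coe_le_coe.mp hab)

lemma toLex_tmonBot_sup_le_sum {ι : Type*} (s : Finset ι) (v : ι → WithBot ℚ) :
    toLex (tmonBot (s.sup v)) ≤ ∑ i ∈ s, toLex (tmonBot (v i)) := by
  classical
  induction s using Finset.induction_on with
  | empty => rfl
  | insert i s hi ih =>
    rw [Finset.sup_insert, Finset.sum_insert hi, toLex_tmonBot_mono.map_sup]
    exact (max_le_add_of_nonneg (toLex_tmonBot_nonneg _) (toLex_tmonBot_nonneg _)).trans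
      (add_le_add_right ih _)

lemma WithBot.add_self_le_of_le_map_half {α : Type*} [Field α] [LinearOrder α]
    [IsStrictOrderedRing α] {a b : WithBot α} (h : a ≤ b.map (· / 2)) :
    a + a ≤ b := by
  cases b with
  | bot => simp_all
  | coe q =>
    cases a with
    | bot => simp
    | coe p =>
      have hp : p ≤ q / 2 := WithBot.coe_le_coe.mp h
      exact WithBot.coe_le_coe.mpr (by linarith)

lemma satK_tmonBot_of_satQ {n : ℕ} {x : Fin n → WithBot ℚ} {c : MACon n} (h : SatQ x c) :
    SatK (fun i => tmonBot (x i)) c := by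
  cases c with
  | maxC i₀ k idx =>
    rw [SatK, kle_iff_toLex_le]
    exact (toLex_tmonBot_mono h).trans (toLex_tmonBot_sup_le_sum _ _)
  | avgC i₀ i₁ i₂ =>
    rw [SatK, kle_iff_toLex_le, sq, ← tmonBot_add, ← tmonBot_add]
    exact toLex_tmonBot_mono (WithBot.add_self_le_of_le_map_half h)
  | constC i₀ c =>
    rw [SatK, show x i₀ = c from h]
    rfl

/-- a solution `x ∈ (ℚ ∪ {-∞})ⁿ` of a max-average constraint system lifts to
the solution `(t^{x₁}, …, t^{x_n})` (with `t^{-∞} = 0`) of the lifted Puiseux system,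
and all the lifted values are nonnegative. -/
theorem lift_solution {n : ℕ} (cs : List (MACon n)) (x : Fin n → WithBot ℚ)
    (hsat : ∀ c ∈ cs, SatQ x c) :
    (∀ c ∈ cs, SatK (fun i => tmonBot (x i)) c) ∧ (∀ i, Knonneg (tmonBot (x i))) :=
  ⟨fun c hc => satK_tmonBot_of_satQ (hsat c hc),
    fun i => (knonneg_iff_nonneg_toLex _).mpr (toLex_tmonBot_nonneg (x i))⟩
end
end

section
/- For every integer n, the singleton set {2^n} ⊆ ℝ is a spectrahedral shadow, i.e., the projection of a spectrahedron. Moreover there is such a representation by a linear matrix inequality whose matrix size and whose rational entries have bit-size polynomial in log₂(|n|+2). -/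
open Matrix

namespace ST13
variable (n : ℤ)
def Ab : ℕ := n.natAbs
def sg : ℤ := if n < 0 then -1 else 1
def KK : ℕ := Nat.log 2 (Ab n)
def TT : ℕ := KK n - 1
def dd (s : ℕ) : ℕ := Ab n / 2 ^ s % 2
def zz (s : ℕ) : ℤ := sg n * ((Ab n / 2 ^ s : ℕ) : ℤ)

lemma sg_cases : sg n = 1 ∨ sg n = -1 := by
  unfold sg; split <;> simp

lemma zz_zero : zz n 0 = n := by
  unfold zz sg Ab
  simp only [pow_zero, Nat.div_one]
  rcases lt_or_ge n 0 with h | h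
  · rw [if_pos h]; omega
  · rw [if_neg (not_lt.mpr h)]; omega

lemma dd_le (s : ℕ) : dd n s ≤ 1 := by
  unfold dd; omega

lemma zz_rec (s : ℕ) : zz n s = 2 * zz n (s + 1) + sg n * dd n s := by
  have h2 : Ab n / 2 ^ (s + 1) = (Ab n / 2 ^ s) / 2 := by
    rw [pow_succ, Nat.div_div_eq_div_mul]
  have h : Ab n / 2 ^ s = 2 * (Ab n / 2 ^ (s + 1)) + dd n s := by
    unfold dd; omega
  unfold zz
  rw [h]
  push_cast
  ring

lemma div_K_eq_one (h : 1 ≤ Ab n) : Ab n / 2 ^ KK n = 1 := by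
  have h1 : 2 ^ KK n ≤ Ab n := Nat.pow_log_le_self 2 (by omega)
  have h2 : Ab n < 2 ^ (KK n + 1) := Nat.lt_pow_succ_log_self (by norm_num) _
  rw [pow_succ] at h2
  exact Nat.div_eq_of_lt_le (by omega) (by omega)

lemma zz_K (h : 1 ≤ Ab n) : zz n (KK n) = sg n := by
  unfold zz; rw [div_K_eq_one n h]; simp

lemma zz_high (s : ℕ) (h : KK n < s) : zz n s = 0 := by
  have h2 : Ab n < 2 ^ (KK n + 1) := Nat.lt_pow_succ_log_self (by norm_num) _
  have h3 : (2:ℕ) ^ (KK n + 1) ≤ 2 ^ s := Nat.pow_le_pow_right (by norm_num) (by omega)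
  have h4 : Ab n / 2 ^ s = 0 := Nat.div_eq_of_lt (by omega)
  unfold zz; rw [h4]; simp

lemma dd_K (h : 1 ≤ Ab n) : dd n (KK n) = 1 := by
  unfold dd; rw [div_K_eq_one n h]


abbrev Vt := (Fin (TT n) × Fin 4) ⊕ Fin 1
abbrev It := (Fin (TT n) × Fin 4) ⊕ Fin 2
abbrev Aff := ℚ × (Vt n → ℚ)

/-- constant affine form -/
def cf (q : ℚ) : Aff n := (q, 0)
/-- monomial affine form -/
def mf (q : ℚ) (v : Vt n) : Aff n := (0, Pi.single v q)

/-- gadget index for level `s`, `1 ≤ s < KK` -/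
def gad (s : ℕ) (h : 1 ≤ s ∧ s < KK n) : Fin (TT n) :=
  ⟨s - 1, by unfold TT; omega⟩

/-- the form whose value is `a_s ^ 2` -/
def Gf (s : ℕ) : Aff n :=
  if h : 1 ≤ s ∧ s < KK n then
    mf n ((2:ℚ) ^ (sg n * (2 * dd n s))) (Sum.inl (gad n s h, 1))
  else if 1 ≤ s ∧ s = KK n then cf n ((2:ℚ) ^ (sg n * 2))
  else cf n 1

/-- the form whose value is `a_s` -/
def Ff (s : ℕ) : Aff n :=
  ((2:ℚ) ^ (sg n * dd n s) * (Gf n (s + 1)).1,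
   (2:ℚ) ^ (sg n * dd n s) • (Gf n (s + 1)).2)

/-- Hankel entries of gadget `u` -/
def Ent (u : Fin (TT n)) : ℕ → Aff n
  | 0 => cf n 1
  | 1 => Ff n (u.val + 2)
  | 2 => Gf n (u.val + 2)
  | (k + 3) => mf n 1 (Sum.inl (u, ⟨min k 3, by omega⟩))

/-- the big affine matrix pattern -/
def patt : It n → It n → Aff n
  | Sum.inl ua, Sum.inl ub =>
      if ua.1 = ub.1 then Ent n ua.1 (ua.2.val + ub.2.val) else cf n 0
  | Sum.inr r, Sum.inr r' =>
      if r = r' then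
        (if r = 0 then ((Ff n 0).1, (Ff n 0).2 - Pi.single (Sum.inr 0) 1)
         else (-(Ff n 0).1, Pi.single (Sum.inr 0) 1 - (Ff n 0).2))
      else cf n 0
  | _, _ => cf n 0

/-- evaluation of an affine form at a real point -/
def evalR (w : Vt n → ℝ) (p : Aff n) : ℝ :=
  (p.1 : ℝ) + ∑ v, w v * ((p.2 v : ℝ))

def Mreal (w : Vt n → ℝ) : Matrix (It n) (It n) ℝ :=
  fun r c => evalR n w (patt n r c)

lemma evalR_cf (w : Vt n → ℝ) (q : ℚ) : evalR n w (cf n q) = (q : ℝ) := by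
  simp [evalR, cf]

lemma evalR_mf (w : Vt n → ℝ) (q : ℚ) (v : Vt n) :
    evalR n w (mf n q v) = w v * (q : ℝ) := by
  simp only [evalR, mf, Pi.single_apply]
  rw [Finset.sum_congr rfl (g := fun v' => if v' = v then w v' * (q:ℝ) else 0)
    (fun v' _ => by by_cases h : v' = v <;> simp [h])]
  simp [Finset.sum_ite_eq']

lemma evalR_Ff (w : Vt n → ℝ) (s : ℕ) :
    evalR n w (Ff n s) = ((2:ℚ) ^ (sg n * dd n s) : ℝ) * evalR n w (Gf n (s + 1)) := by
  simp only [evalR, Ff, Pi.smul_apply, smul_eq_mul]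
  push_cast
  rw [mul_add, Finset.mul_sum]
  congr 1
  exact Finset.sum_congr rfl (fun v _ => by ring)

lemma evalR_sub_single (w : Vt n → ℝ) (p : Aff n) (v : Vt n) :
    evalR n w (p.1, p.2 - Pi.single v 1) = evalR n w p - w v := by
  have h0 := evalR_mf n w 1 v
  rw [evalR, mf] at h0
  simp only [Rat.cast_zero, Rat.cast_one, zero_add, mul_one] at h0
  simp only [evalR, Pi.sub_apply, Rat.cast_sub, mul_sub, Finset.sum_sub_distrib]
  rw [h0]
  ring

lemma evalR_neg_sub_single (w : Vt n → ℝ) (p : Aff n) (v : Vt n) :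
    evalR n w (-p.1, Pi.single v 1 - p.2) = w v - evalR n w p := by
  have h0 := evalR_mf n w 1 v
  rw [evalR, mf] at h0
  simp only [Rat.cast_zero, Rat.cast_one, zero_add, mul_one] at h0
  simp only [evalR, Pi.sub_apply, Rat.cast_sub, mul_sub, Finset.sum_sub_distrib]
  rw [h0]
  push_cast
  ring

lemma KK_zero_of_small (h : Ab n ≤ 1) : KK n = 0 := by
  unfold KK
  rcases Nat.le_one_iff_eq_zero_or_eq_one.mp h with h1 | h1 <;> rw [h1] <;> simp

lemma evalR_Gf_high (w : Vt n → ℝ) (s : ℕ) (h1 : 1 ≤ s) (h2 : KK n ≤ s) :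
    evalR n w (Gf n s) = (2:ℝ) ^ (2 * zz n s) := by
  unfold Gf
  rw [dif_neg (by omega)]
  rcases eq_or_lt_of_le h2 with h3 | h3
  · subst h3
    rw [if_pos ⟨h1, rfl⟩, evalR_cf]
    have hA : 1 ≤ Ab n := by
      by_contra hA
      have := KK_zero_of_small n (by omega)
      omega
    rw [zz_K n hA]
    push_cast
    rw [mul_comm]
  · rw [if_neg (by omega), evalR_cf, zz_high n s h3]
    norm_num

lemma evalR_Gf_mid (w : Vt n → ℝ) (s : ℕ) (h : 1 ≤ s ∧ s < KK n) :
    evalR n w (Gf n s)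
      = w (Sum.inl (gad n s h, 1)) * ((2:ℚ) ^ (sg n * (2 * dd n s)) : ℝ) := by
  unfold Gf; rw [dif_pos h, evalR_mf]
  push_cast
  ring

lemma Ent_one (u : Fin (TT n)) : Ent n u 1 = Ff n (u.val + 2) := rfl
lemma Ent_two (u : Fin (TT n)) : Ent n u 2 = Gf n (u.val + 2) := rfl

lemma finval2 : ((2 : Fin 4) : ℕ) = 2 := rfl
lemma finval3 : ((3 : Fin 4) : ℕ) = 3 := rfl

lemma Mreal_inl (w : Vt n → ℝ) (u : Fin (TT n)) (a b : Fin 4) :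
    Mreal n w (Sum.inl (u, a)) (Sum.inl (u, b)) = evalR n w (Ent n u (a.val + b.val)) := by
  simp [Mreal, patt]

lemma evalR_Ent_0 (w : Vt n → ℝ) (u : Fin (TT n)) : evalR n w (Ent n u 0) = 1 := by
  rw [show Ent n u 0 = cf n 1 from rfl, evalR_cf]; norm_num

lemma evalR_Ent_3 (w : Vt n → ℝ) (u : Fin (TT n)) :
    evalR n w (Ent n u 3) = w (Sum.inl (u, 0)) := by
  rw [show Ent n u 3 = mf n 1 (Sum.inl (u, 0)) from rfl, evalR_mf]; norm_num

lemma evalR_Ent_4 (w : Vt n → ℝ) (u : Fin (TT n)) :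
    evalR n w (Ent n u 4) = w (Sum.inl (u, 1)) := by
  rw [show Ent n u 4 = mf n 1 (Sum.inl (u, 1)) from rfl, evalR_mf]; norm_num

lemma evalR_Ent_5 (w : Vt n → ℝ) (u : Fin (TT n)) :
    evalR n w (Ent n u 5) = w (Sum.inl (u, 2)) := by
  rw [show Ent n u 5 = mf n 1 (Sum.inl (u, 2)) from rfl, evalR_mf]; norm_num

lemma evalR_Ent_6 (w : Vt n → ℝ) (u : Fin (TT n)) :
    evalR n w (Ent n u 6) = w (Sum.inl (u, 3)) := by
  rw [show Ent n u 6 = mf n 1 (Sum.inl (u, 3)) from rfl, evalR_mf]; norm_num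

lemma psd_principal3_det_nonneg {k : ℕ} (w : Vt n → ℝ) (h : (Mreal n w).PosSemidef)
    (e : Fin k → It n) : 0 ≤ ((Mreal n w).submatrix e e).det := by
  have hp := h.submatrix e
  rw [hp.isHermitian.det_eq_prod_eigenvalues]
  exact Finset.prod_nonneg fun i _ => by exact_mod_cast hp.eigenvalues_nonneg i

lemma gadget_forces (w : Vt n → ℝ) (h : (Mreal n w).PosSemidef) (u : Fin (TT n)) (α : ℝ)
    (hF : evalR n w (Ff n (u.val + 2)) = α)
    (hG : evalR n w (Gf n (u.val + 2)) = α ^ 2) :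
    w (Sum.inl (u, 0)) = α ^ 3 ∧ w (Sum.inl (u, 1)) = α ^ 4 := by
  set m3 := w (Sum.inl (u, 0)) with hm3
  set m4 := w (Sum.inl (u, 1)) with hm4
  set m6 := w (Sum.inl (u, 3)) with hm6
  have hQ1 : (!![(1:ℝ), α, α^2; α, α^2, m3; α^2, m3, m4])
      = (Mreal n w).submatrix ![Sum.inl (u,0), Sum.inl (u,1), Sum.inl (u,2)]
          ![Sum.inl (u,0), Sum.inl (u,1), Sum.inl (u,2)] := by
    ext i j
    fin_cases i <;> fin_cases j <;>
      simp [Matrix.submatrix_apply, Mreal_inl, finval2, finval3, Ent_one, Ent_two,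
        evalR_Ent_0, evalR_Ent_3, evalR_Ent_4, evalR_Ent_5, evalR_Ent_6, hF, hG,
        ← hm3, ← hm4]
  have hd1 := psd_principal3_det_nonneg n w h
      ![Sum.inl (u,0), Sum.inl (u,1), Sum.inl (u,2)]
  rw [← hQ1, Matrix.det_fin_three] at hd1
  simp only [Matrix.cons_val', Matrix.cons_val_zero, Matrix.cons_val_one, Matrix.cons_val_two,
    Matrix.head_cons, Matrix.tail_cons, Matrix.vecHead, Matrix.vecTail, Matrix.cons_val_succ,
    Matrix.empty_val', Matrix.cons_val_fin_one, Matrix.head_fin_const, Matrix.of_apply,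
    Function.comp] at hd1
  have e3 : m3 = α ^ 3 := by nlinarith [sq_nonneg (m3 - α^3), hd1]
  have hQ2 : (!![(1:ℝ), α, m3; α, α^2, m4; m3, m4, m6])
      = (Mreal n w).submatrix ![Sum.inl (u,0), Sum.inl (u,1), Sum.inl (u,3)]
          ![Sum.inl (u,0), Sum.inl (u,1), Sum.inl (u,3)] := by
    ext i j
    fin_cases i <;> fin_cases j <;>
      simp [Matrix.submatrix_apply, Mreal_inl, finval2, finval3, Ent_one, Ent_two,
        evalR_Ent_0, evalR_Ent_3, evalR_Ent_4, evalR_Ent_5, evalR_Ent_6, hF, hG,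
        ← hm3, ← hm4, ← hm6]
  have hd2 := psd_principal3_det_nonneg n w h
      ![Sum.inl (u,0), Sum.inl (u,1), Sum.inl (u,3)]
  rw [← hQ2, Matrix.det_fin_three] at hd2
  simp only [Matrix.cons_val', Matrix.cons_val_zero, Matrix.cons_val_one, Matrix.cons_val_two,
    Matrix.head_cons, Matrix.tail_cons, Matrix.vecHead, Matrix.vecTail, Matrix.cons_val_succ,
    Matrix.empty_val', Matrix.cons_val_fin_one, Matrix.head_fin_const, Matrix.of_apply,
    Function.comp] at hd2
  have e4 : m4 = α * m3 := by nlinarith [sq_nonneg (m4 - α * m3), hd2]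
  refine ⟨e3, ?_⟩
  rw [e4, e3]; ring

lemma two_zpow_mul (a b : ℤ) : (2:ℝ) ^ a * (2:ℝ) ^ b = (2:ℝ) ^ (a + b) :=
  (zpow_add₀ (by norm_num : (2:ℝ) ≠ 0) a b).symm

lemma two_zpow_pow (a : ℤ) (k : ℕ) : ((2:ℝ) ^ a) ^ k = (2:ℝ) ^ (a * k) := by
  rw [← zpow_natCast ((2:ℝ) ^ a) k, ← _root_.zpow_mul]

lemma G_pinned (w : Vt n → ℝ) (hpsd : (Mreal n w).PosSemidef) :
    ∀ k s, KK n ≤ s + k → 1 ≤ s → evalR n w (Gf n s) = (2:ℝ) ^ (2 * zz n s) := by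
  intro k
  induction k with
  | zero => exact fun s h h1 => evalR_Gf_high n w s h1 (by omega)
  | succ k ih =>
    intro s hks h1
    by_cases hbig : KK n ≤ s
    · exact evalR_Gf_high n w s h1 hbig
    · push_neg at hbig
      have hs : 1 ≤ s ∧ s < KK n := ⟨h1, hbig⟩
      have hu2 : (gad n s hs).val + 2 = s + 1 := by
        show s - 1 + 2 = s + 1
        omega
      have hG1 : evalR n w (Gf n (s+1)) = (2:ℝ) ^ (2 * zz n (s+1)) :=
        ih (s+1) (by omega) (by omega)
      have hG2 : evalR n w (Gf n (s+2)) = (2:ℝ) ^ (2 * zz n (s+2)) :=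
        ih (s+2) (by omega) (by omega)
      have hF1 : evalR n w (Ff n (s+1)) = (2:ℝ) ^ (zz n (s+1)) := by
        rw [evalR_Ff, hG2]
        push_cast
        rw [two_zpow_mul]
        congr 1
        have h := zz_rec n (s+1)
        rw [show s + 1 + 1 = s + 2 from rfl] at h
        linarith
      have hGsq : evalR n w (Gf n (s+1)) = ((2:ℝ) ^ (zz n (s+1))) ^ 2 := by
        rw [hG1, two_zpow_pow]
        congr 1
        push_cast
        ring
      obtain ⟨hμ3, hμ4⟩ := gadget_forces n w hpsd (gad n s hs) ((2:ℝ) ^ (zz n (s+1)))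
        (by rw [hu2]; exact hF1) (by rw [hu2]; exact hGsq)
      rw [evalR_Gf_mid n w s hs, hμ4, two_zpow_pow]
      push_cast
      rw [two_zpow_mul]
      congr 1
      have h := zz_rec n s
      linarith

lemma F0_pinned (w : Vt n → ℝ) (hpsd : (Mreal n w).PosSemidef) :
    evalR n w (Ff n 0) = (2:ℝ) ^ n := by
  have hG1 : evalR n w (Gf n 1) = (2:ℝ) ^ (2 * zz n 1) :=
    G_pinned n w hpsd (KK n) 1 (by omega) (by omega)
  rw [evalR_Ff, hG1]
  push_cast
  rw [two_zpow_mul]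
  congr 1
  have h0 := zz_rec n 0
  rw [show 0 + 1 = 1 from rfl, zz_zero n] at h0
  linarith

lemma diag_nonneg (w : Vt n → ℝ) (hpsd : (Mreal n w).PosSemidef) (i : It n) :
    0 ≤ Mreal n w i i := by
  have h := psd_principal3_det_nonneg n w hpsd (fun _ : Fin 1 => i)
  rwa [Matrix.det_fin_one, Matrix.submatrix_apply] at h

lemma t_pinned (w : Vt n → ℝ) (hpsd : (Mreal n w).PosSemidef) :
    w (Sum.inr 0) = (2:ℝ) ^ n := by
  have e0 : Mreal n w (Sum.inr 0) (Sum.inr 0) = evalR n w (Ff n 0) - w (Sum.inr 0) := by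
    have : patt n (Sum.inr 0) (Sum.inr 0)
        = ((Ff n 0).1, (Ff n 0).2 - Pi.single (Sum.inr 0) 1) := by
      simp [patt]
    rw [Mreal, this, evalR_sub_single]
  have e1 : Mreal n w (Sum.inr 1) (Sum.inr 1) = w (Sum.inr 0) - evalR n w (Ff n 0) := by
    have : patt n (Sum.inr 1) (Sum.inr 1)
        = (-(Ff n 0).1, Pi.single (Sum.inr 0) 1 - (Ff n 0).2) := by
      simp [patt]
    rw [Mreal, this, evalR_neg_sub_single]
  have h0 := diag_nonneg n w hpsd (Sum.inr 0)
  have h1 := diag_nonneg n w hpsd (Sum.inr 1)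
  rw [e0] at h0
  rw [e1] at h1
  have := F0_pinned n w hpsd
  linarith

noncomputable def wbar : Vt n → ℝ := fun v =>
  match v with
  | Sum.inl uj => (2:ℝ) ^ (zz n (uj.1.val + 2) * (3 + uj.2.val))
  | Sum.inr _ => (2:ℝ) ^ n

lemma wbar_inl (u : Fin (TT n)) (j : Fin 4) :
    wbar n (Sum.inl (u, j)) = (2:ℝ) ^ (zz n (u.val + 2) * (3 + j.val)) := rfl

lemma wbar_inr : wbar n (Sum.inr 0) = (2:ℝ) ^ n := rfl

lemma wbar_G (s : ℕ) (h1 : 1 ≤ s) : evalR n (wbar n) (Gf n s) = (2:ℝ) ^ (2 * zz n s) := by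
  by_cases h : s < KK n
  · have hval : (gad n s ⟨h1, h⟩).val + 2 = s + 1 := by
      show s - 1 + 2 = s + 1
      omega
    rw [evalR_Gf_mid n (wbar n) s ⟨h1, h⟩, wbar_inl, hval]
    simp only [Fin.val_one]
    push_cast
    rw [two_zpow_mul]
    congr 1
    have hr := zz_rec n s
    push_cast
    linarith
  · exact evalR_Gf_high n (wbar n) s h1 (by omega)

lemma wbar_F (s : ℕ) : evalR n (wbar n) (Ff n s) = (2:ℝ) ^ (zz n s) := by
  rw [evalR_Ff, wbar_G n (s+1) (by omega)]
  push_cast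
  rw [two_zpow_mul]
  congr 1
  have hr := zz_rec n s
  linarith

lemma wbar_Ent (u : Fin (TT n)) (k : ℕ) (hk : k ≤ 6) :
    evalR n (wbar n) (Ent n u k) = (2:ℝ) ^ (zz n (u.val + 2) * k) := by
  interval_cases k
  · rw [evalR_Ent_0]; simp
  · rw [Ent_one, wbar_F]; congr 1; push_cast; ring
  · rw [Ent_two, wbar_G n _ (by omega)]; congr 1; push_cast; ring
  · rw [evalR_Ent_3, wbar_inl]; norm_num
  · rw [evalR_Ent_4, wbar_inl]; norm_num
  · rw [evalR_Ent_5, wbar_inl]; norm_num [finval2]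
  · rw [evalR_Ent_6, wbar_inl]; norm_num [finval3]

noncomputable def Wmat : Matrix (It n) (Fin (TT n)) ℝ := fun i g =>
  match i with
  | Sum.inl uj => if uj.1 = g then (2:ℝ) ^ (zz n (g.val + 2) * uj.2.val) else 0
  | Sum.inr _ => 0

lemma M_wbar : Mreal n (wbar n) = Wmat n * (Wmat n)ᵀ := by
  ext i i'
  rcases i with ⟨u, a⟩ | r <;> rcases i' with ⟨u', b⟩ | r'
  · -- inl inl
    rw [Matrix.mul_apply]
    by_cases h : u = u'
    · subst h
      have hterm : ∀ g : Fin (TT n),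
          Wmat n (Sum.inl (u, a)) g * (Wmat n)ᵀ g (Sum.inl (u, b))
            = if u = g
              then (2:ℝ) ^ (zz n (g.val + 2) * a.val) * (2:ℝ) ^ (zz n (g.val + 2) * b.val)
              else 0 := by
        intro g
        by_cases hg : u = g <;> simp [Wmat, Matrix.transpose_apply, hg]
      rw [Finset.sum_congr rfl (fun g _ => hterm g), Finset.sum_ite_eq]
      simp only [Finset.mem_univ, if_true]
      rw [Mreal_inl, wbar_Ent n u (a.val + b.val) (by omega), two_zpow_mul]
      congr 1
      push_cast
      ring
    · have h0 : Mreal n (wbar n) (Sum.inl (u, a)) (Sum.inl (u', b)) = 0 := by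
        simp [Mreal, patt, h, evalR_cf]
      rw [h0]
      symm
      apply Finset.sum_eq_zero
      intro g _
      by_cases hg : u = g
      · subst hg
        have : ¬ u' = u := fun hh => h hh.symm
        simp [Wmat, Matrix.transpose_apply, this]
      · simp [Wmat, Matrix.transpose_apply, hg]
  · -- inl inr
    have h0 : Mreal n (wbar n) (Sum.inl (u, a)) (Sum.inr r') = 0 := by
      simp [Mreal, patt, evalR_cf]
    rw [h0, Matrix.mul_apply]
    symm
    apply Finset.sum_eq_zero
    intro g _
    simp [Wmat, Matrix.transpose_apply]
  · -- inr inl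
    have h0 : Mreal n (wbar n) (Sum.inr r) (Sum.inl (u', b)) = 0 := by
      simp [Mreal, patt, evalR_cf]
    rw [h0, Matrix.mul_apply]
    symm
    apply Finset.sum_eq_zero
    intro g _
    simp [Wmat]
  · -- inr inr
    have hr : ∀ g : Fin (TT n), Wmat n (Sum.inr r) g * (Wmat n)ᵀ g (Sum.inr r') = 0 := by
      intro g; simp [Wmat]
    rw [Matrix.mul_apply, Finset.sum_congr rfl (fun g _ => hr g), Finset.sum_const_zero]
    by_cases h : r = r'
    · subst h
      by_cases h0 : r = 0
      · subst h0
        have : patt n (Sum.inr 0) (Sum.inr 0)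
            = ((Ff n 0).1, (Ff n 0).2 - Pi.single (Sum.inr 0) 1) := by simp [patt]
        rw [Mreal, this, evalR_sub_single, wbar_F, wbar_inr, zz_zero]
        ring
      · have h1 : r = 1 := by omega
        subst h1
        have : patt n (Sum.inr 1) (Sum.inr 1)
            = (-(Ff n 0).1, Pi.single (Sum.inr 0) 1 - (Ff n 0).2) := by simp [patt]
        rw [Mreal, this, evalR_neg_sub_single, wbar_F, wbar_inr, zz_zero]
        ring
    · have : Mreal n (wbar n) (Sum.inr r) (Sum.inr r') = 0 := by
        simp [Mreal, patt, h, evalR_cf]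
      rw [this]

lemma wit_psd : (Mreal n (wbar n)).PosSemidef := by
  rw [M_wbar]
  have hW : ((Wmat n)ᵀ)ᴴ = Wmat n := by
    ext i g
    simp [Matrix.conjTranspose_apply]
  have h := Matrix.posSemidef_conjTranspose_mul_self ((Wmat n)ᵀ)
  rwa [hW] at h

lemma patt_symm : ∀ r c, patt n r c = patt n c r := by
  intro r c
  rcases r with ⟨u, a⟩ | r <;> rcases c with ⟨u', b⟩ | r' <;> try rfl
  · by_cases h : u = u'
    · subst h; simp [patt, Nat.add_comm]
    · have h' : ¬ u' = u := fun hh => h hh.symm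
      simp [patt, h, h']
  · by_cases h : r = r'
    · subst h; rfl
    · have h' : ¬ r' = r := fun hh => h hh.symm
      simp [patt, h, h']

/-- bounded rational -/
def Bnd (q : ℚ) : Prop := q.num.natAbs ≤ 8 ∧ q.den ≤ 8

lemma bnd_two_zpow (z : ℤ) (hz : z.natAbs ≤ 3) : Bnd ((2:ℚ) ^ z) := by
  have h1 : -3 ≤ z := by omega
  have h2 : z ≤ 3 := by omega
  unfold Bnd
  interval_cases z <;> norm_num <;> constructor <;> decide

/-- shape of coefficients -/
def IsPow3 (q : ℚ) : Prop := q = 0 ∨ ∃ z : ℤ, z.natAbs ≤ 3 ∧ (q = 2 ^ z ∨ q = -(2 ^ z))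

lemma isPow3_zero : IsPow3 0 := Or.inl rfl
lemma isPow3_one : IsPow3 1 := Or.inr ⟨0, by norm_num⟩
lemma isPow3_zpow (z : ℤ) (hz : z.natAbs ≤ 3) : IsPow3 ((2:ℚ) ^ z) :=
  Or.inr ⟨z, hz, Or.inl rfl⟩

lemma isPow3_neg (q : ℚ) (h : IsPow3 q) : IsPow3 (-q) := by
  rcases h with h | ⟨z, hz, h | h⟩
  · rw [h]; simpa using isPow3_zero
  · rw [h]; exact Or.inr ⟨z, hz, Or.inr rfl⟩
  · rw [h]; exact Or.inr ⟨z, hz, Or.inl (by rw [neg_neg])⟩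

lemma isPow3_bnd (q : ℚ) (h : IsPow3 q) : Bnd q := by
  rcases h with h | ⟨z, hz, h | h⟩
  · subst h; constructor <;> decide
  · subst h; exact bnd_two_zpow z hz
  · subst h
    have hb := bnd_two_zpow z hz
    unfold Bnd at hb ⊢
    rw [Rat.num_neg_eq_neg_num, Rat.den_neg_eq_den, Int.natAbs_neg]
    exact hb

lemma sg_natAbs : (sg n).natAbs = 1 := by
  rcases sg_cases n with h | h <;> rw [h] <;> rfl

lemma sgdd_natAbs (s : ℕ) : (sg n * dd n s).natAbs ≤ 1 := by
  rw [Int.natAbs_mul, sg_natAbs]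
  have := dd_le n s
  simp
  omega

lemma sg2dd_natAbs (s : ℕ) : (sg n * (2 * dd n s)).natAbs ≤ 2 := by
  rw [Int.natAbs_mul, sg_natAbs]
  have := dd_le n s
  simp [Int.natAbs_mul]
  omega

lemma Gf_fst_form (s : ℕ) :
    (Gf n s).1 = 0 ∨ ∃ z : ℤ, z.natAbs ≤ 2 ∧ (Gf n s).1 = 2 ^ z := by
  unfold Gf
  split_ifs with h1 h2
  · left; rfl
  · right
    exact ⟨sg n * 2, by rw [Int.natAbs_mul, sg_natAbs]; norm_num, rfl⟩
  · right
    refine ⟨0, by norm_num, ?_⟩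
    show (1:ℚ) = 2 ^ (0:ℤ)
    norm_num

lemma Gf_snd_form (s : ℕ) (v : Vt n) :
    (Gf n s).2 v = 0 ∨ ∃ z : ℤ, z.natAbs ≤ 2 ∧ (Gf n s).2 v = 2 ^ z := by
  unfold Gf
  split_ifs with h1 h2
  · rcases eq_or_ne v (Sum.inl (gad n s h1, 1)) with hv | hv
    · right
      refine ⟨sg n * (2 * dd n s), sg2dd_natAbs n s, ?_⟩
      subst hv
      show (Pi.single _ _ : Vt n → ℚ) _ = _
      rw [Pi.single_eq_same]
    · left
      show (Pi.single _ _ : Vt n → ℚ) v = 0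
      rw [Pi.single_eq_of_ne hv]
  · left; rfl
  · left; rfl

lemma Ff_fst_isPow3 (s : ℕ) : IsPow3 ((Ff n s).1) := by
  show IsPow3 ((2:ℚ) ^ (sg n * dd n s) * (Gf n (s+1)).1)
  rcases Gf_fst_form n (s+1) with h | ⟨z, hz, h⟩
  · rw [h, mul_zero]; exact isPow3_zero
  · rw [h, ← zpow_add₀ (by norm_num : (2:ℚ) ≠ 0)]
    apply isPow3_zpow
    have := sgdd_natAbs n s
    omega

lemma Ff_snd_isPow3 (s : ℕ) (v : Vt n) : IsPow3 ((Ff n s).2 v) := by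
  show IsPow3 ((2:ℚ) ^ (sg n * dd n s) * (Gf n (s+1)).2 v)
  rcases Gf_snd_form n (s+1) v with h | ⟨z, hz, h⟩
  · rw [h, mul_zero]; exact isPow3_zero
  · rw [h, ← zpow_add₀ (by norm_num : (2:ℚ) ≠ 0)]
    apply isPow3_zpow
    have := sgdd_natAbs n s
    omega

lemma Ent_fst_isPow3 (u : Fin (TT n)) (k : ℕ) : IsPow3 ((Ent n u k).1) := by
  match k with
  | 0 => exact isPow3_one
  | 1 => exact Ff_fst_isPow3 n _
  | 2 =>
    rcases Gf_fst_form n (u.val + 2) with h | ⟨z, hz, h⟩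
    · rw [show (Ent n u 2).1 = (Gf n (u.val+2)).1 from rfl, h]; exact isPow3_zero
    · rw [show (Ent n u 2).1 = (Gf n (u.val+2)).1 from rfl, h]
      exact isPow3_zpow z (by omega)
  | (k+3) => exact isPow3_zero

lemma Ent_snd_isPow3 (u : Fin (TT n)) (k : ℕ) (v : Vt n) : IsPow3 ((Ent n u k).2 v) := by
  match k with
  | 0 => exact isPow3_zero
  | 1 => exact Ff_snd_isPow3 n _ v
  | 2 =>
    rcases Gf_snd_form n (u.val + 2) v with h | ⟨z, hz, h⟩
    · rw [show (Ent n u 2).2 = (Gf n (u.val+2)).2 from rfl, h]; exact isPow3_zero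
    · rw [show (Ent n u 2).2 = (Gf n (u.val+2)).2 from rfl, h]
      exact isPow3_zpow z (by omega)
  | (k+3) =>
    show IsPow3 ((Pi.single _ _ : Vt n → ℚ) v)
    rcases eq_or_ne v (Sum.inl (u, (⟨min k 3, by omega⟩ : Fin 4))) with hv | hv
    · subst hv; rw [Pi.single_eq_same]; exact isPow3_one
    · rw [Pi.single_eq_of_ne hv]; exact isPow3_zero

lemma isPow3_sub_single (p : Vt n → ℚ) (v0 : Vt n) (hp : ∀ v, IsPow3 (p v))
    (hv0 : p v0 = 0) (v : Vt n) : IsPow3 (p v - (Pi.single v0 1 : Vt n → ℚ) v) := by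
  rcases eq_or_ne v v0 with hv | hv
  · subst hv
    rw [Pi.single_eq_same, hv0, zero_sub]
    exact isPow3_neg _ isPow3_one
  · rw [Pi.single_eq_of_ne hv, sub_zero]
    exact hp v

lemma Ff0_snd_inr (r : Fin 1) : (Ff n 0).2 (Sum.inr r) = 0 := by
  have hrfl : (Ff n 0).2 (Sum.inr r) = (2:ℚ) ^ (sg n * dd n 0) * (Gf n 1).2 (Sum.inr r) := rfl
  rw [hrfl]
  rcases Gf_snd_form n 1 (Sum.inr r) with h | ⟨z, hz, h⟩
  · rw [h, mul_zero]
  · exfalso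
    revert h
    unfold Gf
    split_ifs with h1 h2
    · intro h
      -- single at inl evaluated at inr is 0, but 2^z ≠ 0
      have : (Pi.single (Sum.inl (gad n 1 h1, 1)) ((2:ℚ) ^ (sg n * (2 * dd n 1)))
          : Vt n → ℚ) (Sum.inr r) = 0 := by
        rw [Pi.single_eq_of_ne (by simp)]
      rw [show (mf n ((2:ℚ) ^ (sg n * (2 * dd n 1))) (Sum.inl (gad n 1 h1, 1))).2 (Sum.inr r)
          = (Pi.single (Sum.inl (gad n 1 h1, 1)) ((2:ℚ) ^ (sg n * (2 * dd n 1)))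
            : Vt n → ℚ) (Sum.inr r) from rfl, this] at h
      exact (zpow_ne_zero z (by norm_num : (2:ℚ) ≠ 0)) h.symm
    · intro h
      exact (zpow_ne_zero z (by norm_num : (2:ℚ) ≠ 0)) (show (0:ℚ) = 2 ^ z from h).symm
    · intro h
      exact (zpow_ne_zero z (by norm_num : (2:ℚ) ≠ 0)) (show (0:ℚ) = 2 ^ z from h).symm

lemma patt_fst_isPow3 (r c : It n) : IsPow3 ((patt n r c).1) := by
  rcases r with ⟨u, a⟩ | r <;> rcases c with ⟨u', b⟩ | r'
  · by_cases h : u = u'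
    · subst h
      rw [show patt n (Sum.inl (u,a)) (Sum.inl (u,b)) = Ent n u (a.val+b.val) from by
        simp [patt]]
      exact Ent_fst_isPow3 n u _
    · rw [show patt n (Sum.inl (u,a)) (Sum.inl (u',b)) = cf n 0 from by simp [patt, h]]
      exact isPow3_zero
  · exact isPow3_zero
  · exact isPow3_zero
  · by_cases h : r = r'
    · subst h
      by_cases h0 : r = 0
      · subst h0
        rw [show patt n (Sum.inr 0) (Sum.inr 0)
            = ((Ff n 0).1, (Ff n 0).2 - Pi.single (Sum.inr 0) 1) from by simp [patt]]
        exact Ff_fst_isPow3 n 0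
      · have h1 : r = 1 := by omega
        subst h1
        rw [show patt n (Sum.inr 1) (Sum.inr 1)
            = (-(Ff n 0).1, Pi.single (Sum.inr 0) 1 - (Ff n 0).2) from by simp [patt]]
        exact isPow3_neg _ (Ff_fst_isPow3 n 0)
    · rw [show patt n (Sum.inr r) (Sum.inr r') = cf n 0 from by simp [patt, h]]
      exact isPow3_zero

lemma patt_snd_isPow3 (r c : It n) (v : Vt n) : IsPow3 ((patt n r c).2 v) := by
  rcases r with ⟨u, a⟩ | r <;> rcases c with ⟨u', b⟩ | r'
  · by_cases h : u = u'
    · subst h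
      rw [show patt n (Sum.inl (u,a)) (Sum.inl (u,b)) = Ent n u (a.val+b.val) from by
        simp [patt]]
      exact Ent_snd_isPow3 n u _ v
    · rw [show patt n (Sum.inl (u,a)) (Sum.inl (u',b)) = cf n 0 from by simp [patt, h]]
      exact isPow3_zero
  · exact isPow3_zero
  · exact isPow3_zero
  · by_cases h : r = r'
    · subst h
      by_cases h0 : r = 0
      · subst h0
        rw [show patt n (Sum.inr 0) (Sum.inr 0)
            = ((Ff n 0).1, (Ff n 0).2 - Pi.single (Sum.inr 0) 1) from by simp [patt]]
        show IsPow3 (((Ff n 0).2 - (Pi.single (Sum.inr 0) 1 : Vt n → ℚ)) v)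
        rw [Pi.sub_apply]
        exact isPow3_sub_single n _ _ (fun v' => Ff_snd_isPow3 n 0 v') (Ff0_snd_inr n 0) v
      · have h1 : r = 1 := by omega
        subst h1
        rw [show patt n (Sum.inr 1) (Sum.inr 1)
            = (-(Ff n 0).1, Pi.single (Sum.inr 0) 1 - (Ff n 0).2) from by simp [patt]]
        show IsPow3 (((Pi.single (Sum.inr 0) 1 : Vt n → ℚ) - (Ff n 0).2) v)
        rw [Pi.sub_apply]
        rw [show (Pi.single (Sum.inr 0) 1 : Vt n → ℚ) v - (Ff n 0).2 v
            = -((Ff n 0).2 v - (Pi.single (Sum.inr 0) 1 : Vt n → ℚ) v) from by ring]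
        exact isPow3_neg _
          (isPow3_sub_single n _ _ (fun v' => Ff_snd_isPow3 n 0 v') (Ff0_snd_inr n 0) v)
    · rw [show patt n (Sum.inr r) (Sum.inr r') = cf n 0 from by simp [patt, h]]
      exact isPow3_zero


noncomputable def eV : Vt n ≃ Fin (4 * TT n + 1) :=
  Fintype.equivFinOfCardEq (by simp [mul_comm])

noncomputable def eI : It n ≃ Fin (4 * TT n + 2) :=
  Fintype.equivFinOfCardEq (by simp [mul_comm])

noncomputable def Amat : Fin (4 * TT n + 1) →
    Matrix (Fin (4 * TT n + 2)) (Fin (4 * TT n + 2)) ℚ :=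
  fun i => Matrix.of fun r c => (patt n ((eI n).symm r) ((eI n).symm c)).2 ((eV n).symm i)

noncomputable def Bmat : Matrix (Fin (4 * TT n + 2)) (Fin (4 * TT n + 2)) ℚ :=
  Matrix.of fun r c => -(patt n ((eI n).symm r) ((eI n).symm c)).1

lemma Amat_symm (i : Fin (4 * TT n + 1)) : (Amat n i).IsSymm := by
  unfold Matrix.IsSymm
  ext r c
  rw [Matrix.transpose_apply]
  show (patt n ((eI n).symm c) ((eI n).symm r)).2 _
      = (patt n ((eI n).symm r) ((eI n).symm c)).2 _
  rw [patt_symm]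

lemma Bmat_symm : (Bmat n).IsSymm := by
  unfold Matrix.IsSymm
  ext r c
  rw [Matrix.transpose_apply]
  show -(patt n ((eI n).symm c) ((eI n).symm r)).1
      = -(patt n ((eI n).symm r) ((eI n).symm c)).1
  rw [patt_symm]

lemma glue (w : Fin (4 * TT n + 1) → ℝ) :
    (∑ i, w i • (Amat n i).map (fun q => (q : ℝ))) - (Bmat n).map (fun q => (q : ℝ))
      = (Mreal n (fun v => w (eV n v))).submatrix ((eI n).symm) ((eI n).symm) := by
  ext r c
  simp only [Matrix.sub_apply, Matrix.sum_apply, Matrix.smul_apply, Matrix.map_apply,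
    Matrix.submatrix_apply, Amat, Bmat, Matrix.of_apply, smul_eq_mul, Mreal, evalR]
  rw [← Equiv.sum_comp (eV n).symm
    (fun v => w (eV n v) * (((patt n ((eI n).symm r) ((eI n).symm c)).2 v : ℝ)))]
  simp only [Equiv.apply_symm_apply]
  push_cast
  ring

lemma psd_transfer (w : Fin (4 * TT n + 1) → ℝ) :
    ((∑ i, w i • (Amat n i).map (fun q => (q : ℝ))) - (Bmat n).map (fun q => (q : ℝ))).PosSemidef
      ↔ (Mreal n (fun v => w (eV n v))).PosSemidef := by
  rw [glue]
  exact Matrix.posSemidef_submatrix_equiv ((eI n).symm)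

lemma TT_le_log : TT n ≤ Nat.log 2 (n.natAbs + 2) := by
  have h1 : TT n ≤ KK n := Nat.sub_le _ 1
  have h2 : KK n ≤ Nat.log 2 (n.natAbs + 2) := by
    unfold KK Ab
    exact Nat.log_mono_right (by omega)
  omega

lemma bnd_to_final (q : ℚ) (h : Bnd q) :
    q.num.natAbs ≤ 2 ^ ((Nat.log 2 (n.natAbs + 2) + 2) ^ 3) ∧
      q.den ≤ 2 ^ ((Nat.log 2 (n.natAbs + 2) + 2) ^ 3) := by
  have h8 : (8:ℕ) ≤ 2 ^ ((Nat.log 2 (n.natAbs + 2) + 2) ^ 3) := by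
    have h3 : 3 ≤ (Nat.log 2 (n.natAbs + 2) + 2) ^ 3 := by
      have : 2 ^ 3 ≤ (Nat.log 2 (n.natAbs + 2) + 2) ^ 3 :=
        Nat.pow_le_pow_left (by omega) 3
      omega
    calc (8:ℕ) = 2 ^ 3 := rfl
    _ ≤ 2 ^ ((Nat.log 2 (n.natAbs + 2) + 2) ^ 3) := Nat.pow_le_pow_right (by norm_num) h3
  exact ⟨le_trans h.1 h8, le_trans h.2 h8⟩

end ST13

/-- for every integer `n`, the singleton `{2^n} ⊆ ℝ` is the projection of a
spectrahedron given by an LMI with rational symmetric matrices whose size and whose entries'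
bit-sizes are polynomially bounded in `log₂(|n|+2)`: there is an absolute exponent `e` such
that the number of variables, the matrix size, and the bit-sizes of numerators and
denominators of all entries are at most `(log₂(|n|+2) + 2)^e`. -/
theorem singleton_two_pow_spectrahedral_shadow :
    ∃ e : ℕ, ∀ n : ℤ,
      ∃ (N m : ℕ) (A : Fin N → Matrix (Fin m) (Fin m) ℚ) (B : Matrix (Fin m) (Fin m) ℚ)
        (j : Fin N),
        (∀ i, (A i).IsSymm) ∧ B.IsSymm ∧
        N ≤ (Nat.log 2 (n.natAbs + 2) + 2) ^ e ∧
        m ≤ (Nat.log 2 (n.natAbs + 2) + 2) ^ e ∧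
        (∀ i r s, (A i r s).num.natAbs ≤ 2 ^ ((Nat.log 2 (n.natAbs + 2) + 2) ^ e) ∧
          (A i r s).den ≤ 2 ^ ((Nat.log 2 (n.natAbs + 2) + 2) ^ e)) ∧
        (∀ r s, (B r s).num.natAbs ≤ 2 ^ ((Nat.log 2 (n.natAbs + 2) + 2) ^ e) ∧
          (B r s).den ≤ 2 ^ ((Nat.log 2 (n.natAbs + 2) + 2) ^ e)) ∧
        {((2 : ℝ) ^ n)} =
          {x : ℝ | ∃ w : Fin N → ℝ,
            w j = x ∧
            Matrix.PosSemidef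
              (∑ i, w i • (A i).map (fun q => (q : ℝ)) - B.map (fun q => (q : ℝ)))} := by
  refine ⟨3, fun n => ?_⟩
  refine ⟨4 * ST13.TT n + 1, 4 * ST13.TT n + 2, ST13.Amat n, ST13.Bmat n,
    ST13.eV n (Sum.inr 0), fun i => ST13.Amat_symm n i, ST13.Bmat_symm n, ?_, ?_, ?_, ?_, ?_⟩
  · have hT := ST13.TT_le_log n
    set L := Nat.log 2 (n.natAbs + 2) with hL
    have hc : (L+2)^3 = L^3 + 6*L^2 + 12*L + 8 := by ring
    nlinarith [Nat.zero_le (L^3), Nat.zero_le (L^2)]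
  · have hT := ST13.TT_le_log n
    set L := Nat.log 2 (n.natAbs + 2) with hL
    have hc : (L+2)^3 = L^3 + 6*L^2 + 12*L + 8 := by ring
    nlinarith [Nat.zero_le (L^3), Nat.zero_le (L^2)]
  · intro i r s
    exact ST13.bnd_to_final n _ (ST13.isPow3_bnd _ (ST13.patt_snd_isPow3 n _ _ _))
  · intro r s
    exact ST13.bnd_to_final n _
      (ST13.isPow3_bnd _ (ST13.isPow3_neg _ (ST13.patt_fst_isPow3 n _ _)))
  · ext x
    simp only [Set.mem_singleton_iff, Set.mem_setOf_eq]
    constructor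
    · intro hx
      subst hx
      refine ⟨fun i => ST13.wbar n ((ST13.eV n).symm i), ?_, ?_⟩
      · show ST13.wbar n ((ST13.eV n).symm ((ST13.eV n) (Sum.inr 0))) = _
        rw [Equiv.symm_apply_apply]
        exact ST13.wbar_inr n
      · rw [ST13.psd_transfer]
        have hco : (fun v => ST13.wbar n ((ST13.eV n).symm ((ST13.eV n) v))) = ST13.wbar n := by
          funext v; rw [Equiv.symm_apply_apply]
        rw [hco]
        exact ST13.wit_psd n
    · rintro ⟨w, hj, hpsd⟩
      rw [ST13.psd_transfer] at hpsd
      have hp := ST13.t_pinned n _ hpsd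
      rw [← hj]
      exact hp
end
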